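/- In the functional linear model Y = β(X) + Z, the slope operator β is the zero operator if and only if g_{j₁j₂} = 0 for all j₁ ≥ 1 and j₂ ≥ 1, where g_{j₁j₂} = E(⟨X, φ_{j₁}⟩₁ ⟨Y, ψ_{j₂}⟩₂). (Equivalence underlying the transformation of the hypothesis H₀ : β = 0 into a hypothesis on the cross-covariance coefficients.) -/

import Mathlib

/-!
In the functional linear model `Y = β X + Z`, the slope operator `β` is the zero
operator if and only if `g_{j₁ j₂} = E(⟪X, φ j₁⟫ ⟪Y, ψ j₂⟫) = 0` for all `j₁ ` and `j₂`,
where `(φ j)` and `(ψ j)` are complete orthonormal systems of eigenelements of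
`C_X` and `C_Y` with positive eigenvalues.
-/

open MeasureTheory ProbabilityTheory
open scoped RealInnerProductSpace

/-- Product of two real L² functions is integrable. -/
lemma integrable_mul_of_memL2 {Ω : Type*} [MeasurableSpace Ω] {μ : Measure Ω}
    {f g : Ω → ℝ} (hf : MemLp f 2 μ) (hg : MemLp g 2 μ) :
    Integrable (fun ω => f ω * g ω) μ := by
  have h : MemLp (f • g) 1 μ := by
    exact MemLp.smul hg hf
  rw [← memLp_one_iff_integrable]
  exact h

/-- Key lemma: if `E⟪X,φⱼ⟫⟪X,φₖ⟫ = δⱼₖ λⱼ` then `E⟪X,φⱼ⟫⟪X,v⟫ = λⱼ ⟪φⱼ,v⟫` for every `v`. -/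
lemma cov_eval {Ω : Type*} [MeasurableSpace Ω] (μ : Measure Ω) [IsProbabilityMeasure μ]
    {𝓧 : Type*} [NormedAddCommGroup 𝓧] [InnerProductSpace ℝ 𝓧] [CompleteSpace 𝓧]
    (X : Ω → 𝓧) (hX2 : MemLp X 2 μ)
    (φ : HilbertBasis ℕ ℝ 𝓧) (lam : ℕ → ℝ)
    (hCX : ∀ j k : ℕ, ∫ ω, ⟪X ω, φ j⟫ * ⟪X ω, φ k⟫ ∂μ = if j = k then lam j else 0)
    (j : ℕ) (v : 𝓧) :
    ∫ ω, ⟪X ω, φ j⟫ * ⟪X ω, v⟫ ∂μ = lam j * ⟪φ j, v⟫ := by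
  have hXv : ∀ w : 𝓧, MemLp (fun ω => ⟪X ω, w⟫) 2 μ := by
    intro w
    have h : MemLp (fun ω => (⟪w, X ω⟫ : ℝ)) 2 μ := hX2.const_inner w
    have he : (fun ω => (⟪X ω, w⟫ : ℝ)) = fun ω => ⟪w, X ω⟫ :=
      funext fun ω => real_inner_comm _ _
    rw [he]; exact h
  have hint : ∀ w : 𝓧, Integrable (fun ω => ⟪X ω, φ j⟫ * ⟪X ω, w⟫) μ :=
    fun w => integrable_mul_of_memL2 (hXv (φ j)) (hXv w)
  -- The map `v ↦ ∫ ⟪X,φⱼ⟫⟪X,v⟫` as a continuous linear map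
  set L : 𝓧 →ₗ[ℝ] ℝ :=
    { toFun := fun w => ∫ ω, ⟪X ω, φ j⟫ * ⟪X ω, w⟫ ∂μ
      map_add' := by
        intro a b
        simp_rw [inner_add_right, mul_add]
        exact integral_add (hint a) (hint b)
      map_smul' := by
        intro c a
        simp_rw [inner_smul_right, RingHom.id_apply, mul_left_comm]
        exact integral_smul c _ } with hL
  have hnormsq : Integrable (fun ω => ‖X ω‖ ^ 2) μ := by
    have := hX2.norm.integrable_sq
    simpa using this
  have hbound : ∀ w : 𝓧, ‖L w‖ ≤ (∫ ω, ‖X ω‖ ^ 2 ∂μ) * ‖w‖ := by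
    intro w
    have h1 : ‖L w‖ ≤ ∫ ω, ‖⟪X ω, φ j⟫ * ⟪X ω, w⟫‖ ∂μ :=
      norm_integral_le_integral_norm _
    have h2 : ∫ ω, ‖⟪X ω, φ j⟫ * ⟪X ω, w⟫‖ ∂μ ≤ ∫ ω, ‖X ω‖ ^ 2 * ‖w‖ ∂μ := by
      refine integral_mono (hint w).norm (hnormsq.mul_const _) ?_
      intro ω
      have h3 : ‖⟪X ω, φ j⟫ * ⟪X ω, w⟫‖ ≤ (‖X ω‖ * ‖φ j‖) * (‖X ω‖ * ‖w‖) := by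
        rw [norm_mul]
        exact mul_le_mul (norm_inner_le_norm _ _) (norm_inner_le_norm _ _)
          (norm_nonneg _) (by positivity)
      simpa [φ.orthonormal.1 j, sq, mul_assoc] using h3
    calc ‖L w‖ ≤ ∫ ω, ‖⟪X ω, φ j⟫ * ⟪X ω, w⟫‖ ∂μ := h1
      _ ≤ ∫ ω, ‖X ω‖ ^ 2 * ‖w‖ ∂μ := h2
      _ = (∫ ω, ‖X ω‖ ^ 2 ∂μ) * ‖w‖ := by rw [integral_mul_const]
  set Lc : 𝓧 →L[ℝ] ℝ := L.mkContinuous _ hbound with hLc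
  set Rc : 𝓧 →L[ℝ] ℝ := lam j • (innerSL ℝ (φ j)) with hRc
  have key : Lc = Rc := by
    refine ContinuousLinearMap.ext_on
      (Submodule.dense_iff_topologicalClosure_eq_top.mpr φ.dense_span) ?_
    rintro x ⟨k, rfl⟩
    have h1 : Lc (φ k) = if j = k then lam j else 0 := by
      simpa [Lc, L, LinearMap.mkContinuous_apply] using hCX j k
    have h2 : Rc (φ k) = if j = k then lam j else 0 := by
      have hON : (⟪φ j, φ k⟫ : ℝ) = if j = k then 1 else 0 :=
        orthonormal_iff_ite.mp φ.orthonormal j k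
      simp [Rc, hON, mul_ite]
    rw [h1, h2]
  have := congrArg (fun T : 𝓧 →L[ℝ] ℝ => T v) key
  simpa [Lc, Rc, L, LinearMap.mkContinuous_apply] using this

theorem flm_slope_zero_iff_cross_coefs_zero
    {Ω : Type*} [MeasurableSpace Ω] (μ : Measure Ω) [IsProbabilityMeasure μ]
    {𝓧 : Type*} [NormedAddCommGroup 𝓧] [InnerProductSpace ℝ 𝓧] [CompleteSpace 𝓧]
    [SecondCountableTopology 𝓧] [MeasurableSpace 𝓧] [BorelSpace 𝓧]
    {𝓨 : Type*} [NormedAddCommGroup 𝓨] [InnerProductSpace ℝ 𝓨] [CompleteSpace 𝓨]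
    [SecondCountableTopology 𝓨] [MeasurableSpace 𝓨] [BorelSpace 𝓨]
    -- the model
    (X : Ω → 𝓧) (Z : Ω → 𝓨) (β : 𝓧 →L[ℝ] 𝓨) (Y : Ω → 𝓨)
    (hmodel : ∀ ω, Y ω = β (X ω) + Z ω)
    (hXm : Measurable X) (hZm : Measurable Z)
    (hindep : IndepFun X Z μ)
    (hXmean : ∫ ω, X ω ∂μ = 0) (hZmean : ∫ ω, Z ω ∂μ = 0)
    (hX4 : MemLp X 4 μ) (hZ2 : MemLp Z 2 μ)
    -- complete orthonormal systems of eigenelements of C_X and C_Y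
    (φ : HilbertBasis ℕ ℝ 𝓧) (ψ : HilbertBasis ℕ ℝ 𝓨)
    (lam : ℕ → ℝ) (rho : ℕ → ℝ)
    (hlam_pos : ∀ j, 0 < lam j) (hlam_mono : Antitone lam)
    (hrho_pos : ∀ j, 0 < rho j) (hrho_mono : Antitone rho)
    (hCX : ∀ j k : ℕ, ∫ ω, ⟪X ω, φ j⟫ * ⟪X ω, φ k⟫ ∂μ = if j = k then lam j else 0)
    (hCY : ∀ j k : ℕ, ∫ ω, ⟪Y ω, ψ j⟫ * ⟪Y ω, ψ k⟫ ∂μ = if j = k then rho j else 0)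
    -- β is Hilbert–Schmidt
    (hHS : Summable (fun jk : ℕ × ℕ => (⟪β (φ jk.1), ψ jk.2⟫ : ℝ) ^ 2)) :
    β = 0 ↔ ∀ j₁ j₂ : ℕ, ∫ ω, ⟪X ω, φ j₁⟫ * ⟪Y ω, ψ j₂⟫ ∂μ = 0 := by
  have hX2 : MemLp X 2 μ := hX4.mono_exponent (by norm_num)
  -- the cross moment equals `λⱼ₁ ⟪β φⱼ₁, ψⱼ₂⟫`
  have key : ∀ j₁ j₂ : ℕ,
      ∫ ω, ⟪X ω, φ j₁⟫ * ⟪Y ω, ψ j₂⟫ ∂μ = lam j₁ * ⟪β (φ j₁), ψ j₂⟫ := by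
    intro j₁ j₂
    have hsplit : ∀ ω, ⟪X ω, φ j₁⟫ * ⟪Y ω, ψ j₂⟫
        = ⟪X ω, φ j₁⟫ * ⟪X ω, (ContinuousLinearMap.adjoint β) (ψ j₂)⟫
          + ⟪X ω, φ j₁⟫ * ⟪Z ω, ψ j₂⟫ := by
      intro ω
      rw [hmodel ω, inner_add_left, mul_add, ContinuousLinearMap.adjoint_inner_right]
    -- integrability of the two pieces
    have hXv : ∀ w : 𝓧, MemLp (fun ω => ⟪X ω, w⟫) 2 μ := by
      intro w
      have h : MemLp (fun ω => (⟪w, X ω⟫ : ℝ)) 2 μ := hX2.const_inner w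
      have he : (fun ω => (⟪X ω, w⟫ : ℝ)) = fun ω => ⟪w, X ω⟫ :=
        funext fun ω => real_inner_comm _ _
      rw [he]; exact h
    have hZv : MemLp (fun ω => ⟪Z ω, ψ j₂⟫) 2 μ := by
      have h : MemLp (fun ω => (⟪ψ j₂, Z ω⟫ : ℝ)) 2 μ := hZ2.const_inner (ψ j₂)
      have he : (fun ω => (⟪Z ω, ψ j₂⟫ : ℝ)) = fun ω => ⟪ψ j₂, Z ω⟫ :=
        funext fun ω => real_inner_comm _ _
      rw [he]; exact h
    have hint1 : Integrable
        (fun ω => ⟪X ω, φ j₁⟫ * ⟪X ω, (ContinuousLinearMap.adjoint β) (ψ j₂)⟫) μ :=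
      integrable_mul_of_memL2 (hXv (φ j₁)) (hXv _)
    have hint2 : Integrable (fun ω => ⟪X ω, φ j₁⟫ * ⟪Z ω, ψ j₂⟫) μ :=
      integrable_mul_of_memL2 (hXv (φ j₁)) hZv
    have h1 : ∫ ω, ⟪X ω, φ j₁⟫ * ⟪X ω, (ContinuousLinearMap.adjoint β) (ψ j₂)⟫ ∂μ
        = lam j₁ * ⟪β (φ j₁), ψ j₂⟫ := by
      rw [cov_eval μ X hX2 φ lam hCX j₁ _, ContinuousLinearMap.adjoint_inner_right]
    have h2 : ∫ ω, ⟪X ω, φ j₁⟫ * ⟪Z ω, ψ j₂⟫ ∂μ = 0 := by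
      have hmX : Measurable fun x : 𝓧 => (⟪x, φ j₁⟫ : ℝ) :=
        (continuous_id.inner continuous_const).measurable
      have hmZ : Measurable fun y : 𝓨 => (⟪y, ψ j₂⟫ : ℝ) :=
        (continuous_id.inner continuous_const).measurable
      have hind : IndepFun (fun ω => ⟪X ω, φ j₁⟫) (fun ω => ⟪Z ω, ψ j₂⟫) μ :=
        hindep.comp hmX hmZ
      rw [hind.integral_fun_mul_eq_mul_integral (hXv (φ j₁)).aestronglyMeasurable hZv.aestronglyMeasurable]
      have hZint : Integrable Z μ := hZ2.integrable (by norm_num)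
      have hzero : ∫ ω, ⟪Z ω, ψ j₂⟫ ∂μ = 0 := by
        have h0 : (fun ω => (⟪Z ω, ψ j₂⟫ : ℝ)) = fun ω => ⟪ψ j₂, Z ω⟫ :=
          funext fun ω => real_inner_comm _ _
        rw [h0, integral_inner hZint, hZmean, inner_zero_right]
      rw [hzero, mul_zero]
    calc ∫ ω, ⟪X ω, φ j₁⟫ * ⟪Y ω, ψ j₂⟫ ∂μ
        = ∫ ω, (⟪X ω, φ j₁⟫ * ⟪X ω, (ContinuousLinearMap.adjoint β) (ψ j₂)⟫
            + ⟪X ω, φ j₁⟫ * ⟪Z ω, ψ j₂⟫) ∂μ := by simp_rw [hsplit]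
      _ = lam j₁ * ⟪β (φ j₁), ψ j₂⟫ := by
          rw [integral_add hint1 hint2, h1, h2, add_zero]
  constructor
  · intro hβ j₁ j₂
    rw [key j₁ j₂, hβ]
    simp
  · intro hg
    have hcoef : ∀ j₁ j₂ : ℕ, (⟪β (φ j₁), ψ j₂⟫ : ℝ) = 0 := by
      intro j₁ j₂
      have := hg j₁ j₂
      rw [key j₁ j₂] at this
      exact (mul_eq_zero.mp this).resolve_left (hlam_pos j₁).ne'
    have hβφ : ∀ j₁, β (φ j₁) = 0 := by
      intro j₁
      have : ψ.repr (β (φ j₁)) = 0 := by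
        ext j₂
        rw [ψ.repr_apply_apply]
        simpa [real_inner_comm] using hcoef j₁ j₂
      simpa using ψ.repr.injective (by simpa using this)
    refine ContinuousLinearMap.ext_on
      (Submodule.dense_iff_topologicalClosure_eq_top.mpr φ.dense_span) ?_
    rintro x ⟨k, rfl⟩
    simp [hβφ k]
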